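/- arXiv:1503.03418 — 7 statements merged into one kernel-verified Lean document; each statement's English description precedes it below -/
import Mathlib

section
/- For every nonnegative integer n, the Legendre polynomial satisfies P_n(√(1+4x))² = ∑_{k=0}^{n} C(n,k)·C(n+k,k)·C(2k,k)·x^k, as an identity of polynomials in x. -/
/-- Generalized binomial coefficient C(a,k) = a(a-1)...(a-k+1)/k!. -/
def gchoose (a : ℚ) (k : ℕ) : ℚ :=
  (∏ i ∈ Finset.range k, (a - i)) / (Nat.factorial k : ℚ)

/-- `x` is a `p`-adic integer: its reduced denominator is not divisible by `p`. -/
def IsPInt (p : ℕ) (x : ℚ) : Prop := ¬ p ∣ x.den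

/-- `x ≡ y (mod p^e)` for rationals: `(x - y)/p^e` is a `p`-adic integer. -/
def ModCong (p e : ℕ) (x y : ℚ) : Prop :=
  ∃ z : ℚ, ¬ p ∣ z.den ∧ x - y = (p : ℚ) ^ e * z

/-- The Legendre polynomial `P_n(x) = ∑_{k=0}^n C(n,k) C(n+k,k) ((x-1)/2)^k`. -/
noncomputable def legendre (n : ℕ) : Polynomial ℚ :=
  ∑ k ∈ Finset.range (n + 1),
    Polynomial.C ((n.choose k : ℚ) * ((n + k).choose k)) *
      (Polynomial.C (1/2 : ℚ) * (Polynomial.X - 1)) ^ k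

/-!
Put `y ^ 2 = 1 + 4 x` and `L_n = P_n(y)`. Bonnet's recurrence
`(n + 2) L_{n+2} = (2n + 3) y L_{n+1} - (n + 1) L_n` expresses `L_{n+2} ^ 2` and
`L_{n+1} L_{n+2}` through `L_n ^ 2`, `L_n L_{n+1}` and `L_{n+1} ^ 2`, once `y ^ 2` is replaced
by `1 + 4 x`. The right-hand side `S_n(x)` of the theorem, together with
`D_n(x) = ∑ C(n,k) C(n+k+1,k) C(2k,k) x^k`, satisfies the matching recurrences, so induction gives
`L_n ^ 2 = S_n(x)` and `L_n L_{n+1} = y D_n(x)` together. The three recurrences are checked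
coefficientwise: every coefficient involved is a rational multiple of one `C(n,k) C(n+k,k)`.
-/

open Polynomial Finset

section Binomial

variable {K : Type*} [Field K] [CharZero K]

lemma Nat.cast_choose_succ_right (n k : ℕ) :
    (n.choose (k + 1) : K) = (n - k) / (k + 1) * n.choose k := by
  rw [div_mul_eq_mul_div, eq_div_iff (Nat.cast_add_one_ne_zero k)]
  rcases le_or_gt k n with hk | hk
  · have h := Nat.choose_succ_right_eq n k
    rw [← Nat.cast_inj (R := K)] at h
    push_cast [hk] at h
    linear_combination h
  · simp [Nat.choose_eq_zero_of_lt hk, Nat.choose_eq_zero_of_lt (Nat.lt_succ_of_lt hk)]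

lemma Nat.cast_choose_succ_succ (n k : ℕ) :
    ((n + 1).choose (k + 1) : K) = (n + 1) / (k + 1) * n.choose k := by
  rw [div_mul_eq_mul_div, eq_div_iff (Nat.cast_add_one_ne_zero k)]
  exact_mod_cast (Nat.add_one_mul_choose_eq n k).symm

lemma Nat.cast_choose_eq_mul_choose_succ (n k : ℕ) :
    (n.choose k : K) = (n + 1 - k) / (n + 1) * (n + 1).choose k := by
  rw [div_mul_eq_mul_div, eq_div_iff (Nat.cast_add_one_ne_zero n)]
  rcases le_or_gt k (n + 1) with hk | hk
  · have h := Nat.choose_mul_succ_eq n k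
    rw [← Nat.cast_inj (R := K)] at h
    push_cast [hk] at h
    linear_combination h
  · simp [Nat.choose_eq_zero_of_lt hk, Nat.choose_eq_zero_of_lt (Nat.lt_of_succ_lt hk)]

lemma Nat.cast_centralBinom_succ (k : ℕ) :
    ((k + 1).centralBinom : K) = 2 * (2 * k + 1) / (k + 1) * k.centralBinom := by
  rw [div_mul_eq_mul_div, eq_div_iff (Nat.cast_add_one_ne_zero k)]
  exact_mod_cast (mul_comm _ _).trans (Nat.succ_mul_centralBinom_succ k)

end Binomial

lemma Polynomial.coeff_sum_range_C_mul_X_pow {R : Type*} [Semiring R] {n : ℕ} {f : ℕ → R}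
    (hf : ∀ k, n < k → f k = 0) (m : ℕ) :
    (∑ k ∈ range (n + 1), C (f k) * X ^ k).coeff m = f m := by
  simp only [finsetSum_coeff, coeff_C_mul_X_pow, Finset.sum_ite_eq, mem_range]
  split_ifs with h
  · rfl
  · exact (hf m (by omega)).symm

lemma two_mul_C_half : (2 : ℚ[X]) * C (1 / 2) = 1 := by
  rw [← map_ofNat C 2, ← C_mul]
  norm_num

def legendreCoeff (n k : ℕ) : ℚ := n.choose k * (n + k).choose k

lemma legendreCoeff_of_lt {n k : ℕ} (h : n < k) : legendreCoeff n k = 0 := by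
  simp [legendreCoeff, Nat.choose_eq_zero_of_lt h]

@[simp] lemma legendreCoeff_zero_right (n : ℕ) : legendreCoeff n 0 = 1 := by
  simp [legendreCoeff]

lemma legendreCoeff_succ_right (n k : ℕ) :
    legendreCoeff n (k + 1) = (n - k) * (n + k + 1) / (k + 1) ^ 2 * legendreCoeff n k := by
  rw [legendreCoeff, legendreCoeff, ← add_assoc, Nat.cast_choose_succ_right,
    Nat.cast_choose_succ_succ]
  push_cast
  field_simp

lemma legendreCoeff_eq_mul_succ_left (n k : ℕ) :
    legendreCoeff n k = (n + 1 - k) / (n + k + 1) * legendreCoeff (n + 1) k := by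
  rw [legendreCoeff, legendreCoeff, Nat.cast_choose_eq_mul_choose_succ n,
    Nat.cast_choose_eq_mul_choose_succ (n + k), add_right_comm n 1 k]
  push_cast
  field_simp
  ring

lemma legendreCoeff_succ_succ (n k : ℕ) :
    legendreCoeff (n + 1) (k + 1) =
      (n + k + 1) * (n + k + 2) / (k + 1) ^ 2 * legendreCoeff n k := by
  rw [legendreCoeff_succ_right, legendreCoeff_eq_mul_succ_left n k]
  push_cast
  field_simp
  ring

lemma legendreCoeff_three_term (n k : ℕ) :
    (n + 2) * legendreCoeff (n + 2) (k + 1) =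
      (2 * n + 3) * (2 * legendreCoeff (n + 1) k + legendreCoeff (n + 1) (k + 1)) -
        (n + 1) * legendreCoeff n (k + 1) := by
  rw [legendreCoeff_succ_succ (n + 1), legendreCoeff_succ_right (n + 1),
    legendreCoeff_succ_right n, legendreCoeff_eq_mul_succ_left n k]
  push_cast
  field_simp
  ring

lemma Polynomial.cast_coeff_shiftedLegendre (n k : ℕ) :
    ((shiftedLegendre n).coeff k : ℚ) = (-1) ^ k * legendreCoeff n k := by
  rw [coeff_shiftedLegendre, legendreCoeff, Nat.choose_symm_add]
  push_cast
  ring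

lemma Polynomial.shiftedLegendre_add_two (n : ℕ) :
    (n + 2 : ℤ[X]) * shiftedLegendre (n + 2) =
      (2 * n + 3 : ℤ[X]) * (1 - 2 * X) * shiftedLegendre (n + 1) -
        (n + 1 : ℤ[X]) * shiftedLegendre n := by
  ext (_ | k) <;> rw [← Int.cast_inj (α := ℚ)] <;>
    simp only [add_mul, sub_mul, mul_sub, mul_assoc, one_mul, coeff_add, coeff_sub,
      coeff_ofNat_mul, coeff_natCast_mul, coeff_X_mul, coeff_X_mul_zero, Int.cast_add,
      Int.cast_sub, Int.cast_mul, Int.cast_ofNat, Int.cast_natCast, cast_coeff_shiftedLegendre]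
  · simp
    ring
  · linear_combination (-1) ^ (k + 1) * legendreCoeff_three_term n k

lemma legendre_eq_aeval_shiftedLegendre (n : ℕ) :
    legendre n = aeval (C (1 / 2) * (1 - X)) (shiftedLegendre n) := by
  simp only [legendre, shiftedLegendre, map_sum, map_mul, map_pow, aeval_X, map_natCast,
    map_neg, map_one]
  refine sum_congr rfl fun k _ ↦ ?_
  rw [Nat.choose_symm_add, show (C (1 / 2) * (X - 1) : ℚ[X]) = -1 * (C (1 / 2) * (1 - X)) by ring,
    mul_pow]
  ring

lemma legendre_add_two (n : ℕ) :
    (n + 2 : ℚ[X]) * legendre (n + 2) =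
      (2 * n + 3 : ℚ[X]) * X * legendre (n + 1) - (n + 1 : ℚ[X]) * legendre n := by
  have h := congrArg (aeval (C (1 / 2 : ℚ) * (1 - X))) (shiftedLegendre_add_two n)
  have hX : (1 : ℚ[X]) - 2 * (C (1 / 2) * (1 - X)) = X := by
    linear_combination (X - 1) * two_mul_C_half
  simp only [map_mul, map_sub, map_add, map_natCast, map_one, map_ofNat, aeval_X, hX] at h
  simpa only [legendre_eq_aeval_shiftedLegendre] using h

lemma legendre_zero : legendre 0 = 1 := by
  simp [legendre]

lemma legendre_one : legendre 1 = X := by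
  simp only [legendre, sum_range_succ, sum_range_zero, Nat.choose_one_right,
    Nat.choose_zero_right]
  push_cast
  simp only [one_mul, map_one, map_ofNat]
  linear_combination (X - 1) * two_mul_C_half

noncomputable def legendreSq (n : ℕ) : ℚ[X] :=
  ∑ k ∈ range (n + 1), C (legendreCoeff n k * k.centralBinom) * X ^ k

-- `D_n` of the induction: `P_n(y) P_{n+1}(y) = y D_n(x)` whenever `y ^ 2 = 1 + 4 x`.
noncomputable def legendreMulSucc (n : ℕ) : ℚ[X] :=
  ∑ k ∈ range (n + 1), C ((n.choose k : ℚ) * (n + k + 1).choose k * k.centralBinom) * X ^ k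

lemma coeff_legendreSq (n m : ℕ) :
    (legendreSq n).coeff m = legendreCoeff n m * m.centralBinom :=
  coeff_sum_range_C_mul_X_pow (fun _ hk ↦ by rw [legendreCoeff_of_lt hk, zero_mul]) m

lemma coeff_legendreMulSucc (n m : ℕ) :
    (legendreMulSucc n).coeff m =
      (n + 1 - m) / (n + 1) * legendreCoeff (n + 1) m * m.centralBinom := by
  rw [legendreMulSucc, coeff_sum_range_C_mul_X_pow, Nat.cast_choose_eq_mul_choose_succ n,
    legendreCoeff, add_right_comm n 1 m]
  · ring
  · intro k hk
    simp [Nat.choose_eq_zero_of_lt hk]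

lemma legendreMulSucc_add_one (n : ℕ) :
    (n + 2 : ℚ[X]) * legendreMulSucc (n + 1) =
      (2 * n + 3 : ℚ[X]) * legendreSq (n + 1) - (n + 1 : ℚ[X]) * legendreMulSucc n := by
  ext m
  simp only [add_mul, one_mul, coeff_add, coeff_sub, mul_assoc, coeff_ofNat_mul,
    coeff_natCast_mul, coeff_legendreSq, coeff_legendreMulSucc]
  rw [legendreCoeff_eq_mul_succ_left (n + 1) m]
  push_cast
  field_simp
  ring

lemma legendreSq_add_two (n : ℕ) :
    (n + 2 : ℚ[X]) ^ 2 * legendreSq (n + 2) =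
      (2 * n + 3 : ℚ[X]) * (1 + 4 * X) *
          ((2 * n + 3 : ℚ[X]) * legendreSq (n + 1) - 2 * (n + 1 : ℚ[X]) * legendreMulSucc n) +
        (n + 1 : ℚ[X]) ^ 2 * legendreSq n := by
  ext (_ | k) <;>
    simp only [sq, add_mul, mul_add, mul_sub, mul_assoc, one_mul, coeff_add, coeff_sub,
      coeff_ofNat_mul, coeff_natCast_mul, coeff_X_mul, coeff_X_mul_zero, coeff_legendreSq,
      coeff_legendreMulSucc]
  · simp
    field_simp
    ring
  · rw [legendreCoeff_succ_succ (n + 1), legendreCoeff_succ_right (n + 1),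
      legendreCoeff_succ_right n, legendreCoeff_eq_mul_succ_left n k, Nat.cast_centralBinom_succ]
    push_cast
    field_simp
    ring

lemma legendreSq_zero : legendreSq 0 = 1 := by
  simp [legendreSq, legendreCoeff]

lemma legendreSq_one : legendreSq 1 = 1 + 4 * X := by
  simp [legendreSq, sum_range_succ, legendreCoeff, Nat.centralBinom]
  norm_num

lemma legendreMulSucc_zero : legendreMulSucc 0 = 1 := by
  simp [legendreMulSucc]

section Evaluation

variable {A : Type*} [CommRing A] [Algebra ℚ A] {x y : A}

lemma isUnit_natCast_add_two (n : ℕ) : IsUnit (n + 2 : A) := by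
  simpa [map_ofNat] using
    (isUnit_iff_ne_zero.2 (by positivity : (n + 2 : ℚ) ≠ 0)).map (algebraMap ℚ A)

lemma aeval_legendre_add_two (y : A) (n : ℕ) :
    (n + 2) * aeval y (legendre (n + 2)) =
      (2 * n + 3) * y * aeval y (legendre (n + 1)) - (n + 1) * aeval y (legendre n) := by
  simpa [map_ofNat] using congrArg (aeval y) (legendre_add_two n)

lemma aeval_legendreMulSucc_add_one (x : A) (n : ℕ) :
    (n + 2) * aeval x (legendreMulSucc (n + 1)) =
      (2 * n + 3) * aeval x (legendreSq (n + 1)) - (n + 1) * aeval x (legendreMulSucc n) := by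
  simpa [map_ofNat] using congrArg (aeval x) (legendreMulSucc_add_one n)

lemma aeval_legendreSq_add_two (x : A) (n : ℕ) :
    (n + 2) ^ 2 * aeval x (legendreSq (n + 2)) =
      (2 * n + 3) * (1 + 4 * x) *
          ((2 * n + 3) * aeval x (legendreSq (n + 1)) -
            2 * (n + 1) * aeval x (legendreMulSucc n)) +
        (n + 1) ^ 2 * aeval x (legendreSq n) := by
  simpa [map_ofNat] using congrArg (aeval x) (legendreSq_add_two n)

lemma aeval_legendre_sq_and_mul_succ (hxy : y ^ 2 = 1 + 4 * x) (n : ℕ) :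
    aeval y (legendre n) ^ 2 = aeval x (legendreSq n) ∧
      aeval y (legendre (n + 1)) ^ 2 = aeval x (legendreSq (n + 1)) ∧
      aeval y (legendre n) * aeval y (legendre (n + 1)) = y * aeval x (legendreMulSucc n) := by
  induction n with
  | zero =>
    simp [legendre_zero, legendre_one, legendreSq_zero, legendreSq_one, legendreMulSucc_zero,
      hxy, map_ofNat]
  | succ n ih =>
    obtain ⟨hsq, hsq_succ, hmul⟩ := ih
    have hP := aeval_legendre_add_two y n
    have hD := aeval_legendreMulSucc_add_one x n
    have hS := aeval_legendreSq_add_two x n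
    have hu := isUnit_natCast_add_two (A := A) n
    set L := fun k ↦ aeval y (legendre k)
    refine ⟨hsq_succ, (hu.pow 2).mul_left_cancel ?_, hu.mul_left_cancel ?_⟩
    · linear_combination ((n + 2) * L (n + 2) + (2 * n + 3) * y * L (n + 1) - (n + 1) * L n) * hP
        + (2 * n + 3) ^ 2 * y ^ 2 * hsq_succ - 2 * (2 * n + 3) * (n + 1) * y * hmul
        + ((2 * n + 3) ^ 2 * aeval x (legendreSq (n + 1)) -
          2 * (2 * n + 3) * (n + 1) * aeval x (legendreMulSucc n)) * hxy
        + (n + 1) ^ 2 * hsq - hS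
    · linear_combination L (n + 1) * hP - y * hD + (2 * n + 3) * y * hsq_succ - (n + 1) * hmul

lemma aeval_legendre_sq (hxy : y ^ 2 = 1 + 4 * x) (n : ℕ) :
    aeval y (legendre n) ^ 2 = aeval x (legendreSq n) :=
  (aeval_legendre_sq_and_mul_succ hxy n).1

lemma aeval_legendreSq (x : A) (n : ℕ) :
    aeval x (legendreSq n) =
      ∑ k ∈ range (n + 1), (n.choose k : A) * (n + k).choose k * (2 * k).choose k * x ^ k := by
  simp [legendreSq, legendreCoeff, Nat.centralBinom_eq_two_mul_choose]

end Evaluation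

theorem legendre_sq_eval (n : ℕ) (x : ℝ) (hx : 0 ≤ 1 + 4 * x) :
    (Polynomial.aeval (Real.sqrt (1 + 4 * x)) (legendre n)) ^ 2 =
      ∑ k ∈ Finset.range (n + 1),
        (n.choose k : ℝ) * ((n + k).choose k) * ((2 * k).choose k) * x ^ k := by
  rw [aeval_legendre_sq (Real.sq_sqrt hx), aeval_legendreSq]
end

section
/- For every nonnegative integer n and any rational (or real) number a: ∑_{k=0}^{n} C(a,k)·C(−1−a,k)·C(a,n−k)·C(−1−a,n−k) = ∑_{k=0}^{n} C(2k,k)·C(a,k)·C(−1−a,k)·C(k,n−k)·(−1)^{n−k}. -/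
/-!
Put `u k = C(a,k) C(-1-a,k)` and `x = a(a+1)`. Then `(k+1)² u (k+1) = (k(k+1) - x) u k`, so
`f t = ∑ u k t^k` is the Legendre function `P_a(1-2t)`, and the identity is the coefficient form of
Clausen's formula `f(t)² = ∑ C(2k,k) u k (t - t²)^k`. Only the recurrence of `u` matters: by creative
telescoping (with certificates found by Zeilberger's algorithm) the coefficients of both sides satisfy
the same three-term recurrence of order two, and they agree for `n = 0, 1`.
-/

open Finset

theorem sum_range_three_term_telescope {R : Type*} [CommRing R] (F : ℕ → ℕ → R) (G : ℕ → R)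
    (c₀ c₁ c₂ : R) (m : ℕ)
    (h : ∀ k ≤ m, c₂ * F (m + 2) k + c₁ * F (m + 1) k + c₀ * F m k = G (k + 1) - G k) :
    c₂ * ∑ k ∈ range (m + 3), F (m + 2) k + c₁ * ∑ k ∈ range (m + 2), F (m + 1) k +
        c₀ * ∑ k ∈ range (m + 1), F m k =
      G (m + 1) - G 0 + c₂ * (F (m + 2) (m + 1) + F (m + 2) (m + 2)) + c₁ * F (m + 1) (m + 1) := by
  have hsum : ∑ k ∈ range (m + 1), (c₂ * F (m + 2) k + c₁ * F (m + 1) k + c₀ * F m k) =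
      G (m + 1) - G 0 :=
    (sum_congr rfl fun k hk => h k (Nat.lt_succ_iff.mp (mem_range.mp hk))).trans
      (sum_range_sub G _)
  simp only [sum_add_distrib, ← mul_sum] at hsum
  rw [sum_range_succ _ (m + 2), sum_range_succ _ (m + 1), sum_range_succ (F (m + 1))]
  linear_combination hsum

theorem cast_choose_succ_right_mul {R : Type*} [CommRing R] (n k : ℕ) :
    (n.choose (k + 1) : R) * (k + 1) = n.choose k * (n - k) := by
  rcases le_or_gt k n with h | h
  · rw [← Nat.cast_sub h]
    exact_mod_cast congrArg (Nat.cast : ℕ → R) (Nat.choose_succ_right_eq n k)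
  · rw [Nat.choose_eq_zero_of_lt h, Nat.choose_eq_zero_of_lt (by omega)]
    simp

section

variable {K : Type*} [Field K] [CharZero K] {x : K} {u v : ℕ → K}

/-- `∑ u k t^k` solves `t(1-t) f'' + (1-2t) f' + x f = 0`. -/
def LegendreCoeffs (x : K) (u : ℕ → K) : Prop :=
  ∀ k : ℕ, ((k : K) + 1) ^ 2 * u (k + 1) = (k * (k + 1) - x) * u k

/-- The recurrence satisfied by the coefficients of `f²` when those of `f` are `LegendreCoeffs x`. -/
def SquareRec (x : K) (S : ℕ → K) : Prop :=
  ∀ m : ℕ, ((m : K) + 2) ^ 3 * S (m + 2) - (2 * m + 3) * ((m + 1) * (m + 2) - 2 * x) * S (m + 1) +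
    (m + 1) * (m * (m + 2) - 4 * x) * S m = 0

theorem SquareRec.eq {S T : ℕ → K} (hS : SquareRec x S) (hT : SquareRec x T)
    (h₀ : S 0 = T 0) (h₁ : S 1 = T 1) : S = T := by
  funext n
  induction n using Nat.twoStepInduction with
  | zero => exact h₀
  | one => exact h₁
  | more m ih₀ ih₁ =>
    have hm : ((m : K) + 2) ^ 3 ≠ 0 := pow_ne_zero _ (by norm_cast)
    apply mul_left_cancel₀ hm
    linear_combination hS m - hT m + (2 * m + 3) * ((m + 1) * (m + 2) - 2 * x) * ih₁ -
      (m + 1) * (m * (m + 2) - 4 * x) * ih₀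

def cauchySq (u : ℕ → K) (n : ℕ) : K := ∑ k ∈ range (n + 1), u k * u (n - k)

/-- `substSum v n` is the coefficient of `t^n` in `∑ v k (t - t²)^k`. -/
def substSum (v : ℕ → K) (n : ℕ) : K :=
  ∑ k ∈ range (n + 1), v k * (k.choose (n - k) : K) * (-1) ^ (n - k)

/-- The denominator `(m + 2 - k)²` does not vanish for the `k ≤ m + 1` where this is evaluated. -/
def cauchySqCert (x : K) (u : ℕ → K) (m k : ℕ) : K :=
  k ^ 2 * ((m + 2) * (m + 2 - k) + x * (3 * m + 6 - 2 * k)) / (m + 2 - k) ^ 2 * u k * u (m + 1 - k)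

def substSumCert (v : ℕ → K) (m k : ℕ) : K :=
  -(m + 2) * k ^ 2 * v k * (k.choose (m + 2 - k) : K) * (-1) ^ (m + 2 - k)

theorem cauchySq_term_telescope (hu : LegendreCoeffs x u) {m k : ℕ} (hk : k ≤ m) :
    ((m : K) + 2) ^ 3 * (u k * u (m + 2 - k)) +
        -((2 * m + 3) * ((m + 1) * (m + 2) - 2 * x)) * (u k * u (m + 1 - k)) +
        (m + 1) * (m * (m + 2) - 4 * x) * (u k * u (m - k)) =
      cauchySqCert x u m (k + 1) - cauchySqCert x u m k := by
  obtain ⟨j, rfl⟩ := Nat.exists_eq_add_of_le hk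
  have hu' : ∀ i : ℕ, u (i + 1) = (i * (i + 1) - x) * u i / ((i : K) + 1) ^ 2 := fun i => by
    rw [eq_div_iff (pow_ne_zero _ (Nat.cast_add_one_ne_zero i)), mul_comm, hu]
  have hj₂ : k + j + 2 - k = j + 1 + 1 := by omega
  have hj₁ : k + j + 1 - k = j + 1 := by omega
  have hj₁' : k + j + 1 - (k + 1) = j := by omega
  simp only [cauchySqCert, hj₂, hj₁, hj₁', Nat.add_sub_cancel_left, hu']
  have h₁ : (j : K) + 1 ≠ 0 := Nat.cast_add_one_ne_zero j
  have h₂ : (j : K) + 2 ≠ 0 := by norm_cast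
  have h₃ : (k : K) + 1 ≠ 0 := Nat.cast_add_one_ne_zero k
  push_cast
  rw [show (k : K) + j + 2 - (k + 1) = j + 1 by ring, show (k : K) + j + 2 - k = j + 2 by ring,
    show (j : K) + 1 + 1 = j + 2 by ring]
  field_simp
  ring

theorem substSum_term_telescope
    (hv : ∀ k : ℕ, ((k : K) + 1) ^ 3 * v (k + 1) = 2 * (2 * k + 1) * (k * (k + 1) - x) * v k)
    {m k : ℕ} (hk : k ≤ m) :
    ((m : K) + 2) ^ 3 * (v k * (k.choose (m + 2 - k) : K) * (-1) ^ (m + 2 - k)) +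
        -((2 * m + 3) * ((m + 1) * (m + 2) - 2 * x)) *
          (v k * (k.choose (m + 1 - k) : K) * (-1) ^ (m + 1 - k)) +
        (m + 1) * (m * (m + 2) - 4 * x) * (v k * (k.choose (m - k) : K) * (-1) ^ (m - k)) =
      substSumCert v m (k + 1) - substSumCert v m k := by
  obtain ⟨j, rfl⟩ := Nat.exists_eq_add_of_le hk
  have h₁ : (j : K) + 1 ≠ 0 := Nat.cast_add_one_ne_zero j
  have h₂ : (j : K) + 2 ≠ 0 := by norm_cast
  have h₃ : (k : K) + 1 ≠ 0 := Nat.cast_add_one_ne_zero k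
  have hv' : v (k + 1) = 2 * (2 * k + 1) * (k * (k + 1) - x) * v k / ((k : K) + 1) ^ 3 := by
    rw [eq_div_iff (pow_ne_zero _ h₃), mul_comm, hv]
  have hC : ((k + 1).choose (j + 1) : K) = (k + 1) * k.choose j / (j + 1) := by
    rw [eq_div_iff h₁]
    exact_mod_cast (Nat.add_one_mul_choose_eq k j).symm
  have hC₁ : (k.choose (j + 1) : K) = k.choose j * (k - j) / (j + 1) := by
    rw [eq_div_iff h₁, cast_choose_succ_right_mul]
  have hC₂ : (k.choose (j + 1 + 1) : K) = k.choose (j + 1) * (k - (j + 1)) / (j + 2) := by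
    rw [eq_div_iff h₂]
    have := cast_choose_succ_right_mul (R := K) k (j + 1)
    push_cast at this
    linear_combination this
  have hj₂ : k + j + 2 - k = j + 1 + 1 := by omega
  have hj₁ : k + j + 1 - k = j + 1 := by omega
  have hj₁' : k + j + 2 - (k + 1) = j + 1 := by omega
  simp only [substSumCert, hj₂, hj₁, hj₁', Nat.add_sub_cancel_left]
  rw [hC₂, hC, hC₁, hv']
  push_cast
  field_simp
  ring

theorem squareRec_cauchySq (hu : LegendreCoeffs x u) : SquareRec x (cauchySq u) := by
  intro m
  have h := sum_range_three_term_telescope (fun n k => u k * u (n - k)) (cauchySqCert x u m) _ _ _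
    m fun k hk => cauchySq_term_telescope hu hk
  have hG : cauchySqCert x u m (m + 1) - cauchySqCert x u m 0 =
      (m + 1) ^ 2 * ((m + 2) + x * (m + 4)) * u (m + 1) * u 0 := by
    simp only [cauchySqCert, Nat.sub_self]
    push_cast
    ring
  simp only [Nat.sub_self, show m + 2 - (m + 1) = 1 by omega, hG] at h
  have hu₀ : u 1 = -x * u 0 := by simpa using hu 0
  have hu₁ := hu (m + 1)
  push_cast at hu₁
  unfold cauchySq
  linear_combination h + ((m : K) + 2) * u 0 * hu₁ + ((m : K) + 2) ^ 3 * u (m + 1) * hu₀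

theorem squareRec_substSum
    (hv : ∀ k : ℕ, ((k : K) + 1) ^ 3 * v (k + 1) = 2 * (2 * k + 1) * (k * (k + 1) - x) * v k) :
    SquareRec x (substSum v) := by
  intro m
  have h := sum_range_three_term_telescope (fun n k => v k * (k.choose (n - k) : K) * (-1) ^ (n - k))
    (substSumCert v m) _ _ _ m fun k hk => substSum_term_telescope hv hk
  have hG : substSumCert v m (m + 1) - substSumCert v m 0 = (m + 2) * (m + 1) ^ 3 * v (m + 1) := by
    simp only [substSumCert, show m + 2 - (m + 1) = 1 by omega, Nat.choose_one_right]
    push_cast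
    ring
  simp only [Nat.sub_self, show m + 2 - (m + 1) = 1 by omega, Nat.choose_one_right,
    Nat.choose_zero_right, hG] at h
  push_cast at h
  have hv₁ := hv (m + 1)
  push_cast at hv₁
  unfold substSum
  linear_combination h + hv₁

theorem centralBinom_mul_rec (hu : LegendreCoeffs x u) (k : ℕ) :
    ((k : K) + 1) ^ 3 * ((k + 1).centralBinom * u (k + 1)) =
      2 * (2 * k + 1) * (k * (k + 1) - x) * (k.centralBinom * u k) := by
  have hc : ((k : K) + 1) * (k + 1).centralBinom = 2 * (2 * k + 1) * k.centralBinom := by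
    exact_mod_cast Nat.succ_mul_centralBinom_succ k
  linear_combination ((k : K) + 1) * (k + 1).centralBinom * hu k + (k * (k + 1) - x) * u k * hc

theorem cauchySq_eq_substSum_centralBinom_mul (hu : LegendreCoeffs x u) (h₀ : u 0 = 1) :
    cauchySq u = substSum fun k => (k.centralBinom : K) * u k := by
  have hu₀ : u 1 = -x := by simpa [h₀] using hu 0
  refine SquareRec.eq (squareRec_cauchySq hu) (squareRec_substSum (centralBinom_mul_rec hu)) ?_ ?_
  · simp [cauchySq, substSum, h₀]
  · simp [cauchySq, substSum, sum_range_succ, h₀, hu₀, show Nat.centralBinom 1 = 2 from rfl]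
    ring

end

theorem gchoose_succ_mul (a : ℚ) (k : ℕ) :
    gchoose a (k + 1) * (k + 1) = gchoose a k * (a - k) := by
  have h : (k.factorial : ℚ) ≠ 0 := Nat.cast_ne_zero.2 k.factorial_ne_zero
  simp only [gchoose, prod_range_succ, Nat.factorial_succ]
  push_cast
  field_simp

theorem legendreCoeffs_gchoose_mul_gchoose (a : ℚ) :
    LegendreCoeffs (a * (a + 1)) fun k => gchoose a k * gchoose (-1 - a) k := fun k => by
  linear_combination gchoose (-1 - a) (k + 1) * (k + 1) * gchoose_succ_mul a k +
    gchoose a k * (a - k) * gchoose_succ_mul (-1 - a) k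

theorem sum_gchoose_identity (n : ℕ) (a : ℚ) :
    ∑ k ∈ Finset.range (n + 1),
        gchoose a k * gchoose (-1 - a) k * gchoose a (n - k) * gchoose (-1 - a) (n - k) =
      ∑ k ∈ Finset.range (n + 1),
        ((2 * k).choose k : ℚ) * gchoose a k * gchoose (-1 - a) k *
          (k.choose (n - k)) * (-1) ^ (n - k) := by
  have h := congrFun (cauchySq_eq_substSum_centralBinom_mul
    (legendreCoeffs_gchoose_mul_gchoose a) (by simp [gchoose])) n
  simp only [cauchySq, substSum, Nat.centralBinom_eq_two_mul_choose] at h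
  exact (sum_congr rfl fun k _ => by ring).trans (h.trans (sum_congr rfl fun k _ => by ring))
end

section
/- Both sides of the identity in Lemma 2.2 satisfy the recurrence n³·S(n) = (2n−1)(n²−n−2a(a+1))·S(n−1) + (n−1)(2a+n)(2a+2−n)·S(n−2) for n ≥ 2, with S(0)=1 and S(1)=−2a(a+1). -/
noncomputable def S1f (a : ℚ) (n : ℕ) : ℚ :=
  ∑ k ∈ Finset.range (n + 1),
    gchoose a k * gchoose (-1 - a) k * gchoose a (n - k) * gchoose (-1 - a) (n - k)

noncomputable def S2f (a : ℚ) (n : ℕ) : ℚ :=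
  ∑ k ∈ Finset.range (n + 1),
    ((2 * k).choose k : ℚ) * gchoose a k * gchoose (-1 - a) k *
      (k.choose (n - k)) * (-1) ^ (n - k)

open Finset

section CreativeTelescoping

variable {R : Type*} [CommRing R]

def extendByZero (f : ℕ → R) (j : ℤ) : R := if 0 ≤ j then f j.toNat else 0

@[simp]
lemma extendByZero_natCast (f : ℕ → R) (n : ℕ) : extendByZero f n = f n := by
  simp [extendByZero]

lemma extendByZero_of_neg (f : ℕ → R) {j : ℤ} (hj : j < 0) : extendByZero f j = 0 :=
  if_neg (not_le.mpr hj)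

lemma extendByZero_recurrence {f : ℕ → R} {p q : ℤ → R} (hq : q (-1) = 0)
    (h : ∀ n : ℕ, q n * f (n + 1) = p n * f n) (j : ℤ) :
    q j * extendByZero f (j + 1) = p j * extendByZero f j := by
  rcases le_or_gt 0 j with hj | hj
  · lift j to ℕ using hj with n
    rw [← Nat.cast_succ, extendByZero_natCast, extendByZero_natCast]
    exact h n
  · obtain rfl | hj' : j = -1 ∨ j < -1 := by omega
    · rw [hq, extendByZero_of_neg f hj, zero_mul, mul_zero]
    · rw [extendByZero_of_neg f hj, extendByZero_of_neg f (by omega), mul_zero, mul_zero]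

def ThreeTermRec (b : R) (S : ℕ → R) : Prop :=
  ∀ n : ℕ, 2 ≤ n → (n : R) ^ 3 * S n =
    (2 * n - 1) * ((n : R) ^ 2 - n - 2 * b) * S (n - 1) +
      ((n : R) - 1) * (4 * b + 2 * n - (n : R) ^ 2) * S (n - 2)

theorem threeTermRec_of_certificate (b : R) (g : ℕ → ℤ → R) (hg : ∀ k j, j < 0 → g k j = 0)
    (G : ℕ → ℕ → R)
    (hG : ∀ n k : ℕ, (n : R) ^ 3 * g k (n - k) -
      (2 * n - 1) * ((n : R) ^ 2 - n - 2 * b) * g k (n - 1 - k) -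
      ((n : R) - 1) * (4 * b + 2 * n - (n : R) ^ 2) * g k (n - 2 - k) = G n k - G n (k + 1))
    (hG₀ : ∀ n, G n 0 = 0) (hG₁ : ∀ n, G n (n + 1) = 0) :
    ThreeTermRec b fun m => ∑ k ∈ range (m + 1), g k (m - k : ℕ) := by
  have hsum (m : ℕ) :
      ∑ k ∈ range (m + 1), g k (m - k : ℕ) = ∑ k ∈ range (m + 1), g k (m - k) :=
    sum_congr rfl fun k hk => by rw [Nat.cast_sub (mem_range_succ_iff.mp hk)]
  intro n hn
  simp only [hsum]
  obtain ⟨m, rfl⟩ : ∃ m, n = m + 2 := ⟨n - 2, by omega⟩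
  have tele : ∑ k ∈ range (m + 3), (G (m + 2) k - G (m + 2) (k + 1)) = 0 := by
    rw [sum_range_sub', hG₀, hG₁, sub_zero]
  simp only [← hG, sum_sub_distrib, ← mul_sum] at tele
  have h₁ : ∑ k ∈ range (m + 3), g k ((m + 2 : ℕ) - 1 - k) =
      ∑ k ∈ range (m + 2), g k ((m + 1 : ℕ) - k) := by
    rw [sum_range_succ, hg _ _ (by omega), add_zero]
    exact sum_congr rfl fun k _ => by congr 1; push_cast; ring
  have h₂ : ∑ k ∈ range (m + 3), g k ((m + 2 : ℕ) - 2 - k) =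
      ∑ k ∈ range (m + 1), g k (m - k) := by
    rw [sum_range_succ, sum_range_succ, hg _ _ (by omega), hg _ _ (by omega), add_zero, add_zero]
    exact sum_congr rfl fun k _ => by congr 1; push_cast; ring
  rw [h₁, h₂] at tele
  rw [show m + 2 - 1 = m + 1 by omega, Nat.add_sub_cancel]
  linear_combination tele

theorem threeTermRec_sum_mul_sub (b : R) {c : ℕ → R}
    (hc : ∀ k : ℕ, ((k : R) + 1) ^ 2 * c (k + 1) = (k * (k + 1) - b) * c k) :
    ThreeTermRec b fun m => ∑ k ∈ range (m + 1), c k * c (m - k) := by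
  set u := extendByZero c
  have hu (j : ℤ) : ((j : R) + 1) ^ 2 * u (j + 1) = (j * (j + 1) - b) * u j :=
    extendByZero_recurrence (p := fun j : ℤ => (j : R) * (j + 1) - b)
      (q := fun j : ℤ => ((j : R) + 1) ^ 2) (by simp) (by exact_mod_cast hc) j
  have hu_neg (j : ℤ) (hj : j < 0) : u j = 0 := extendByZero_of_neg c hj
  suffices ThreeTermRec b fun m => ∑ k ∈ range (m + 1), u k * u (m - k : ℕ) by simpa [u] using this
  refine threeTermRec_of_certificate b (fun k j => u k * u j)
    (fun k j hj => by rw [hu_neg j hj, mul_zero])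
    (fun n k => u k * ((n : R) ^ 3 * u (n - k) +
      ((n + 2 * k) * b + n * k - (n : R) ^ 2 * (n - 1)) * u (n - 1 - k))) ?_ ?_ ?_
  · intro n k
    have h₁ := hu k
    have h₂ := hu (n - 2 - k)
    push_cast at h₁ h₂ ⊢
    linear_combination (norm := ring_nf)
      ((3 * (n : R) - 2 * k - 2) * u (n - 1 - k) - (3 * (n : R) - 2 * k - 4) * u (n - 2 - k)) *
        h₁ + (-((n : R) + 2 * k) * u k + ((n : R) + 2 * k + 2) * u (k + 1)) * h₂
  · intro n
    have h := hu (n - 1)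
    push_cast at h ⊢
    linear_combination (norm := ring_nf) (n * u 0) * h
  · intro n
    simp [hu_neg]

def signedChoose (k : ℕ) : ℤ → R := extendByZero fun m => (k.choose m : R) * (-1) ^ m

lemma signedChoose_of_neg (k : ℕ) {j : ℤ} (hj : j < 0) : (signedChoose k j : R) = 0 :=
  extendByZero_of_neg _ hj

lemma signedChoose_succ (k : ℕ) (j : ℤ) :
    (signedChoose (k + 1) (j + 1) : R) = signedChoose k (j + 1) - signedChoose k j := by
  rcases le_or_gt 0 j with hj | hj
  · lift j to ℕ using hj with m
    simp only [signedChoose, ← Nat.cast_succ, extendByZero_natCast, Nat.choose_succ_succ', pow_succ]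
    push_cast
    ring
  · obtain rfl | hj' : j = -1 ∨ j < -1 := by omega
    · norm_num [signedChoose, extendByZero]
    · simp [signedChoose_of_neg k hj, signedChoose_of_neg _ (by omega : j + 1 < 0)]

lemma signedChoose_recurrence (k : ℕ) (j : ℤ) :
    ((j : R) + 1) * signedChoose k (j + 1) = (j - k) * signedChoose k j := by
  refine extendByZero_recurrence (p := fun j : ℤ => (j : R) - k) (q := fun j : ℤ => (j : R) + 1)
    (by simp) (fun m => ?_) j
  have h := congrArg (Nat.cast (R := R)) (Nat.add_one_mul_choose_eq k m)
  push_cast [Nat.choose_succ_succ'] at h ⊢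
  linear_combination (-1) ^ m * h

theorem threeTermRec_sum_mul_choose (b : R) {d : ℕ → R}
    (hd : ∀ k : ℕ, ((k : R) + 1) ^ 3 * d (k + 1) = 2 * (2 * k + 1) * (k * (k + 1) - b) * d k) :
    ThreeTermRec b fun m => ∑ k ∈ range (m + 1), d k * (k.choose (m - k)) * (-1) ^ (m - k) := by
  suffices ThreeTermRec b fun m => ∑ k ∈ range (m + 1), d k * signedChoose k (m - k : ℕ) by
    simpa [signedChoose, mul_assoc] using this
  refine threeTermRec_of_certificate b (fun k j => d k * signedChoose k j)
    (fun k j hj => by rw [signedChoose_of_neg k hj, mul_zero])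
    (fun n k => n * k ^ 2 * d k * signedChoose k (n - k)) ?_ ?_ ?_
  · intro n k
    have hp := signedChoose_succ (R := R) k (n - 2 - k)
    have hx := signedChoose_recurrence (R := R) k (n - 1 - k)
    have hy := signedChoose_recurrence (R := R) k (n - 2 - k)
    push_cast at hp hx hy ⊢
    linear_combination (norm := ring_nf)
      (signedChoose k (n - 1 - k) - 2 * signedChoose k (n - 2 - k)) * hd k +
      (n * ((k : R) + 1) ^ 2 * d (k + 1)) * hp + (n * ((n : R) + k) * d k) * hx +
      (-(4 * (k : R) ^ 2 + 2 * k - 4 * b - n + 2 * n * k + (n : R) ^ 2) * d k +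
        ((k : R) + 1) ^ 2 * d (k + 1)) * hy
  · simp
  · intro n
    simp [signedChoose_of_neg]

end CreativeTelescoping

lemma gchoose_zero (x : ℚ) : gchoose x 0 = 1 := by simp [gchoose]

lemma gchoose_one (x : ℚ) : gchoose x 1 = x := by simp [gchoose]

lemma succ_mul_gchoose_succ (x : ℚ) (k : ℕ) :
    ((k : ℚ) + 1) * gchoose x (k + 1) = (x - k) * gchoose x k := by
  have : (k.factorial : ℚ) ≠ 0 := by positivity
  simp only [gchoose, prod_range_succ, Nat.factorial_succ]
  push_cast
  field_simp

lemma gchoose_mul_gchoose_recurrence (a : ℚ) (k : ℕ) :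
    ((k : ℚ) + 1) ^ 2 * (gchoose a (k + 1) * gchoose (-1 - a) (k + 1)) =
      (k * (k + 1) - a * (a + 1)) * (gchoose a k * gchoose (-1 - a) k) := by
  linear_combination ((k : ℚ) + 1) * gchoose (-1 - a) (k + 1) * succ_mul_gchoose_succ a k +
    (a - k) * gchoose a k * succ_mul_gchoose_succ (-1 - a) k

lemma centralBinom_mul_gchoose_mul_gchoose_recurrence (a : ℚ) (k : ℕ) :
    ((k : ℚ) + 1) ^ 3 *
        ((2 * (k + 1)).choose (k + 1) * gchoose a (k + 1) * gchoose (-1 - a) (k + 1)) =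
      2 * (2 * k + 1) * (k * (k + 1) - a * (a + 1)) *
        ((2 * k).choose k * gchoose a k * gchoose (-1 - a) k) := by
  have h := congrArg (Nat.cast (R := ℚ)) (Nat.succ_mul_centralBinom_succ k)
  simp only [Nat.centralBinom_eq_two_mul_choose] at h
  push_cast at h
  linear_combination ((k : ℚ) + 1) ^ 2 * (gchoose a (k + 1) * gchoose (-1 - a) (k + 1)) * h +
    2 * (2 * (k : ℚ) + 1) * (2 * k).choose k * gchoose_mul_gchoose_recurrence a k

lemma threeTermRec_S1f (a : ℚ) : ThreeTermRec (a * (a + 1)) (S1f a) := by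
  convert threeTermRec_sum_mul_sub (a * (a + 1))
    (c := fun k => gchoose a k * gchoose (-1 - a) k) (gchoose_mul_gchoose_recurrence a) using 2
  simp only [S1f, mul_assoc]

lemma threeTermRec_S2f (a : ℚ) : ThreeTermRec (a * (a + 1)) (S2f a) := by
  convert threeTermRec_sum_mul_choose (a * (a + 1))
    (d := fun k => (2 * k).choose k * gchoose a k * gchoose (-1 - a) k)
    (centralBinom_mul_gchoose_mul_gchoose_recurrence a) using 2
  simp only [S2f]

theorem S1f_S2f_recurrence (a : ℚ) :
    (S1f a 0 = 1 ∧ S1f a 1 = -2 * a * (a + 1) ∧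
      ∀ n : ℕ, 2 ≤ n →
        (n : ℚ) ^ 3 * S1f a n =
          (2 * n - 1) * ((n : ℚ) ^ 2 - n - 2 * a * (a + 1)) * S1f a (n - 1) +
            ((n : ℚ) - 1) * (2 * a + n) * (2 * a + 2 - n) * S1f a (n - 2)) ∧
    (S2f a 0 = 1 ∧ S2f a 1 = -2 * a * (a + 1) ∧
      ∀ n : ℕ, 2 ≤ n →
        (n : ℚ) ^ 3 * S2f a n =
          (2 * n - 1) * ((n : ℚ) ^ 2 - n - 2 * a * (a + 1)) * S2f a (n - 1) +
            ((n : ℚ) - 1) * (2 * a + n) * (2 * a + 2 - n) * S2f a (n - 2)) := by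
  refine ⟨⟨?_, ?_, fun n hn => ?_⟩, ?_, ?_, fun n hn => ?_⟩
  · simp [S1f, gchoose_zero]
  · simp only [S1f, sum_range_succ, sum_range_zero, Nat.sub_zero, Nat.sub_self, gchoose_zero,
      gchoose_one]
    ring
  · linear_combination threeTermRec_S1f a n hn
  · simp [S2f, gchoose_zero]
  · simp only [S2f, sum_range_succ, sum_range_zero, Nat.sub_zero, Nat.sub_self, gchoose_zero,
      gchoose_one, Nat.choose_self, Nat.choose_one_right]
    norm_num
    ring
  · linear_combination threeTermRec_S2f a n hn
end

section
/- Let p be an odd prime and a a p-adic integer (element of ℤ_p, rationals with denominator coprime to p). Then for every integer k with (p+1)/2 ≤ k ≤ p−1, the product C(a,k)·C(−1−a,k) ≡ 0 (mod p). -/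
/-!
Embed `ℚ` in `ℚ_[p]`: `a` becomes a `p`-adic integer `α`, the factorials `k!` are units since
`k < p`, and it remains to see that `∏_{i<k} (α - i) · ∏_{i<k} (-1 - α - i)` lies in the maximal ideal.
Modulo `p` its factors are `t - i` and `-1 - t - i` for the residue `t` of `α`, and these vanish
at `i = t` or at `i = p - 1 - t`; as `p ≤ 2k`, one of the two is below `k`.
-/

open Finset Nat

theorem ZMod.exists_lt_eq_or_neg_one_sub_eq {p k : ℕ} [NeZero p] (t : ZMod p) (hk : p ≤ 2 * k) :
    ∃ i < k, t = i ∨ -1 - t = i := by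
  have ht := t.val_lt
  by_cases hsmall : t.val < k
  · exact ⟨t.val, hsmall, .inl (ZMod.natCast_zmod_val t).symm⟩
  · refine ⟨p - 1 - t.val, by omega, .inr ?_⟩
    rw [Nat.cast_sub (by omega), Nat.cast_sub (by omega), ZMod.natCast_self, ZMod.natCast_zmod_val]
    ring

theorem ZMod.prod_sub_mul_prod_neg_one_sub_eq_zero {p k : ℕ} [NeZero p] (t : ZMod p)
    (hk : p ≤ 2 * k) : (∏ i ∈ range k, (t - i)) * ∏ i ∈ range k, (-1 - t - i) = 0 := by
  obtain ⟨i, hik, hi | hi⟩ := t.exists_lt_eq_or_neg_one_sub_eq hk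
  · exact mul_eq_zero_of_left (prod_eq_zero (mem_range.2 hik) (sub_eq_zero.2 hi)) _
  · exact mul_eq_zero_of_right _ (prod_eq_zero (mem_range.2 hik) (sub_eq_zero.2 hi))

namespace PadicInt

variable {p : ℕ} [Fact p.Prime]

theorem norm_prod_sub_mul_prod_neg_one_sub_lt_one (x : ℤ_[p]) {k : ℕ} (hk : p ≤ 2 * k) :
    ‖(∏ i ∈ range k, (x - i)) * ∏ i ∈ range k, (-1 - x - i)‖ < 1 := by
  rw [← mem_nonunits, ← IsLocalRing.mem_maximalIdeal, ← ker_toZMod, RingHom.mem_ker]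
  simpa [map_prod] using (toZMod x).prod_sub_mul_prod_neg_one_sub_eq_zero hk

theorem norm_factorial_eq_one {k : ℕ} (hk : k < p) : ‖(k ! : ℤ_[p])‖ = 1 :=
  norm_natCast_eq_one_iff.2 <| (Nat.Prime.coprime_iff_not_dvd Fact.out).2 <|
    (Nat.Prime.dvd_factorial Fact.out).not.2 (by omega)

end PadicInt

namespace Padic

variable {p : ℕ} [Fact p.Prime]

theorem norm_rat_le_one_iff {q : ℚ} : ‖(q : ℚ_[p])‖ ≤ 1 ↔ ¬ p ∣ q.den := by
  refine ⟨fun h hdvd => ?_, norm_rat_le_one⟩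
  have := PadicInt.isUnit_iff.1 (PadicInt.isUnit_den q h)
  rw [PadicInt.norm_natCast_eq_one_iff] at this
  exact (Nat.Prime.coprime_iff_not_dvd Fact.out).1 this hdvd

theorem modCong_one_zero_iff_norm_lt_one {x : ℚ} : ModCong p 1 x 0 ↔ ‖(x : ℚ_[p])‖ < 1 := by
  have hp : (0 : ℝ) < p := by exact_mod_cast (Fact.out : p.Prime).pos
  have hp0 : (p : ℚ) ≠ 0 := by exact_mod_cast (Fact.out : p.Prime).ne_zero
  have hlt : ‖(x : ℚ_[p])‖ < 1 ↔ ‖(x : ℚ_[p])‖ ≤ (p : ℝ) ^ (-1 : ℤ) := by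
    rw [norm_le_pow_iff_norm_lt_pow_add_one]; norm_num
  rw [hlt]
  constructor
  · rintro ⟨z, hz, hxz⟩
    rw [sub_zero, pow_one] at hxz
    rw [hxz, Rat.cast_mul, norm_mul, Rat.cast_natCast, norm_p, zpow_neg_one]
    exact mul_le_of_le_one_right (by positivity) (norm_rat_le_one hz)
  · intro hx
    refine ⟨x / p, norm_rat_le_one_iff.1 ?_, by field_simp; ring⟩
    rw [Rat.cast_div, norm_div, Rat.cast_natCast, norm_p, div_le_one (by positivity)]
    simpa using hx

theorem norm_gchoose_mul_gchoose_neg_one_sub_lt_one {a : ℚ} (ha : ‖(a : ℚ_[p])‖ ≤ 1) {k : ℕ}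
    (hk : p ≤ 2 * k) (hkp : k < p) :
    ‖((gchoose a k * gchoose (-1 - a) k : ℚ) : ℚ_[p])‖ < 1 := by
  obtain ⟨α, hα⟩ : ∃ α : ℤ_[p], (α : ℚ_[p]) = a := ⟨⟨a, ha⟩, rfl⟩
  have hcoe (x : ℤ_[p]) : PadicInt.Coe.ringHom x = x := rfl
  have hcast : ((gchoose a k * gchoose (-1 - a) k : ℚ) : ℚ_[p]) =
      PadicInt.Coe.ringHom ((∏ i ∈ range k, (α - i)) * ∏ i ∈ range k, (-1 - α - i)) /
        PadicInt.Coe.ringHom (k ! : ℤ_[p]) ^ 2 := by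
    rw [map_mul, map_prod, map_prod]
    simp only [hcoe, PadicInt.coe_sub, PadicInt.coe_neg, PadicInt.coe_one, PadicInt.coe_natCast]
    simp [gchoose, hα]
    ring
  rw [hcast, norm_div, norm_pow, hcoe, hcoe, ← PadicInt.norm_def, ← PadicInt.norm_def,
    PadicInt.norm_factorial_eq_one hkp, one_pow, div_one]
  exact α.norm_prod_sub_mul_prod_neg_one_sub_lt_one hk

end Padic

theorem gchoose_mul_gchoose_cong_zero_general (p : ℕ) (hp : p.Prime)
    (a : ℚ) (ha : IsPInt p a) (k : ℕ) (hk1 : p + 1 ≤ 2 * k) (hk2 : k ≤ p - 1) :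
    ModCong p 1 (gchoose a k * gchoose (-1 - a) k) 0 := by
  have : Fact p.Prime := ⟨hp⟩
  rw [Padic.modCong_one_zero_iff_norm_lt_one]
  exact Padic.norm_gchoose_mul_gchoose_neg_one_sub_lt_one (Padic.norm_rat_le_one ha) (by omega)
    (by omega)

theorem gchoose_mul_gchoose_cong_zero (p : ℕ) (hp : p.Prime) (hodd : Odd p)
    (a : ℚ) (ha : IsPInt p a) (k : ℕ) (hk1 : p + 1 ≤ 2 * k) (hk2 : k ≤ p - 1) :
    ModCong p 1 (gchoose a k * gchoose (-1 - a) k) 0 :=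
  gchoose_mul_gchoose_cong_zero_general p hp a ha k hk1 hk2
end

section
/- Let p be an odd prime, a ∈ ℤ_p, and let ⟨a⟩ ∈ {0,1,…,p−1} satisfy a ≡ ⟨a⟩ (mod p). Then for every x, ∑_{k=0}^{p−1} C(2k,k)·C(a,k)·C(−1−a,k)·x^k ≡ P_{⟨a⟩}(√(1−4x))² (mod p), where P_{⟨a⟩}(√(1−4x))² is interpreted via the polynomial identity P_n(√(1+4y))² = ∑_{k=0}^{n} C(n,k)C(n+k,k)C(2k,k)y^k with y = −x. -/
/-!
Since `k < p`, the factorial `k!` is a `p`-adic unit, so `gchoose a k` is a polynomial in `a` with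
`p`-integral coefficients; hence it is `p`-integral and its class mod `p` depends only on that of `a`.
The sum is therefore congruent, term by term, to its value at `a = r`. There `gchoose r k = C(r, k)`
and `gchoose (-1 - r) k = (-1)^k C(r + k, k)`; the terms with `k > r` vanish, and what is left is
the right-hand side.
-/

namespace Valuation

variable {R Γ₀ : Type*} [CommRing R] [LinearOrderedCommGroupWithZero Γ₀] (v : Valuation R Γ₀)
  {γ : Γ₀}

theorem map_mul_sub_mul_left_le {b c d : R} (hc : c ∈ v.integer) (hbd : v (b - d) ≤ γ) :
    v (c * b - c * d) ≤ γ := by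
  rw [← mul_sub, map_mul]
  exact (mul_le_of_le_one_left' hc).trans hbd

theorem map_mul_sub_mul_le {a b c d : R} (ha : a ∈ v.integer) (hd : d ∈ v.integer)
    (hac : v (a - c) ≤ γ) (hbd : v (b - d) ≤ γ) : v (a * b - c * d) ≤ γ := by
  rw [show a * b - c * d = a * (b - d) + (a - c) * d by ring]
  refine v.map_add_le ?_ ?_ <;> rw [map_mul]
  · exact (mul_le_of_le_one_left' ha).trans hbd
  · exact (mul_le_of_le_one_right' hd).trans hac

theorem map_prod_sub_prod_le {ι : Type*} {s : Finset ι} {f g : ι → R}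
    (hf : ∀ i ∈ s, f i ∈ v.integer) (hg : ∀ i ∈ s, g i ∈ v.integer)
    (hfg : ∀ i ∈ s, v (f i - g i) ≤ γ) : v (∏ i ∈ s, f i - ∏ i ∈ s, g i) ≤ γ := by
  classical
  induction s using Finset.induction_on with
  | empty => simp
  | insert j s hj ih =>
    simp only [Finset.mem_insert, forall_eq_or_imp] at hf hg hfg
    rw [Finset.prod_insert hj, Finset.prod_insert hj]
    exact v.map_mul_sub_mul_le hf.1 (Subring.prod_mem _ hg.2) hfg.1 (ih hf.2 hg.2 hfg.2)

end Valuation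

theorem gchoose_eq_ringChoose (a : ℚ) (k : ℕ) : gchoose a k = Ring.choose a k := by
  rw [Ring.choose_eq_smul, gchoose, ← descPochhammer_eval_eq_prod_range, smul_eq_mul,
    ← Polynomial.aeval_eq_smeval]
  simp [Polynomial.aeval_def, Polynomial.eval₂_eq_eval_map, descPochhammer_map, div_eq_inv_mul]

theorem gchoose_natCast (n k : ℕ) : gchoose n k = n.choose k := by
  rw [gchoose_eq_ringChoose, Ring.choose_natCast]

theorem gchoose_neg_one_sub_natCast (n k : ℕ) :
    gchoose (-1 - n) k = (-1) ^ k * (n + k).choose k := by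
  rw [gchoose_eq_ringChoose, show (-1 - n : ℚ) = -((n + 1 : ℕ) : ℚ) by push_cast; ring,
    Ring.choose_neg, show ((n + 1 : ℕ) : ℚ) + k - 1 = ((n + k : ℕ) : ℚ) by push_cast; ring,
    Ring.choose_natCast, Units.smul_def]
  simp

theorem sum_range_choose_mul_choose_eq_sum_gchoose (x : ℚ) {r n : ℕ} (hrn : r < n) :
    ∑ k ∈ Finset.range (r + 1),
        (r.choose k : ℚ) * ((r + k).choose k) * ((2 * k).choose k) * (-x) ^ k =
      ∑ k ∈ Finset.range n, ((2 * k).choose k : ℚ) * gchoose r k * gchoose (-1 - r) k * x ^ k := by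
  have hterm (k : ℕ) : ((2 * k).choose k : ℚ) * gchoose r k * gchoose (-1 - r) k * x ^ k =
      (r.choose k : ℚ) * ((r + k).choose k) * ((2 * k).choose k) * (-x) ^ k := by
    rw [gchoose_natCast, gchoose_neg_one_sub_natCast, neg_pow]
    ring
  simp_rw [hterm]
  refine Finset.sum_subset (Finset.range_subset_range.mpr hrn) fun k _ hk => ?_
  rw [Nat.choose_eq_zero_of_lt (by simpa using hk), Nat.cast_zero, zero_mul, zero_mul, zero_mul]

section PAdic

open scoped WithZero

variable {p : ℕ} [Fact p.Prime]

local notation "v" => Rat.padicValuation p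

theorem isPInt_iff_mem_integer {x : ℚ} : IsPInt p x ↔ x ∈ (v).integer :=
  Rat.padicValuation_le_one_iff.symm

theorem modCong_iff_padicValuation_sub_le {e : ℕ} {x y : ℚ} :
    ModCong p e x y ↔ v (x - y) ≤ v p ^ e := by
  constructor
  · rintro ⟨z, hz, hxy⟩
    rw [hxy, map_mul, map_pow]
    exact mul_le_of_le_one_right' (isPInt_iff_mem_integer.mp hz)
  · intro h
    have hp : (p : ℚ) ^ e ≠ 0 := pow_ne_zero _ (Nat.cast_ne_zero.mpr (Fact.out : p.Prime).ne_zero)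
    refine ⟨(x - y) / p ^ e, isPInt_iff_mem_integer.mpr ?_, by field_simp⟩
    rw [Valuation.mem_integer_iff, map_div₀, map_pow]
    exact div_le_one_of_le₀ h zero_le

theorem padicValuation_factorial {k : ℕ} (hk : k < p) : v (k.factorial : ℚ) = 1 := by
  rw [← Int.cast_natCast, Rat.padicValuation_cast, Int.padicValuation_eq_one_iff,
    Int.natCast_dvd_natCast, (Fact.out : p.Prime).dvd_factorial]
  omega

theorem gchoose_mem_integer {a : ℚ} (ha : a ∈ (v).integer) {k : ℕ} (hk : k < p) :
    gchoose a k ∈ (v).integer := by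
  rw [Valuation.mem_integer_iff, gchoose, map_div₀, padicValuation_factorial hk, div_one]
  exact Subring.prod_mem _ fun i _ => sub_mem ha (natCast_mem _ i)

theorem padicValuation_gchoose_sub_le {a b : ℚ} (ha : a ∈ (v).integer) (hb : b ∈ (v).integer)
    {γ : ℤᵐ⁰} (hab : v (a - b) ≤ γ) {k : ℕ} (hk : k < p) :
    v (gchoose a k - gchoose b k) ≤ γ := by
  rw [gchoose, gchoose, ← sub_div, map_div₀, padicValuation_factorial hk, div_one]
  exact (v).map_prod_sub_prod_le (fun i _ => sub_mem ha (natCast_mem _ i))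
    (fun i _ => sub_mem hb (natCast_mem _ i)) fun i _ => by rwa [sub_sub_sub_cancel_right]

end PAdic

theorem sum_cong_legendre_sq_general (p : ℕ) (hp : p.Prime)
    (a x : ℚ) (ha : IsPInt p a) (hx : IsPInt p x)
    (r : ℕ) (hr : r < p) (har : ModCong p 1 a r) :
    ModCong p 1
      (∑ k ∈ Finset.range p,
        ((2 * k).choose k : ℚ) * gchoose a k * gchoose (-1 - a) k * x ^ k)
      (∑ k ∈ Finset.range (r + 1),
        (r.choose k : ℚ) * ((r + k).choose k) * ((2 * k).choose k) * (-x) ^ k) := by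
  have : Fact p.Prime := ⟨hp⟩
  rw [isPInt_iff_mem_integer] at ha hx
  rw [modCong_iff_padicValuation_sub_le] at har ⊢
  set v := Rat.padicValuation p
  have hr' : (r : ℚ) ∈ v.integer := natCast_mem _ r
  have hna : -1 - a ∈ v.integer := sub_mem (neg_mem (one_mem _)) ha
  have hnr : -1 - (r : ℚ) ∈ v.integer := sub_mem (neg_mem (one_mem _)) hr'
  have hnar : v ((-1 - a) - (-1 - r)) ≤ v p ^ 1 := by
    rwa [sub_sub_sub_cancel_left, Valuation.map_sub_swap]
  rw [sum_range_choose_mul_choose_eq_sum_gchoose x hr, ← Finset.sum_sub_distrib]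
  refine v.map_sum_le fun k hk => ?_
  have hk : k < p := Finset.mem_range.mp hk
  have hprod := v.map_mul_sub_mul_le (gchoose_mem_integer ha hk) (gchoose_mem_integer hnr hk)
    (padicValuation_gchoose_sub_le ha hr' har hk) (padicValuation_gchoose_sub_le hna hnr hnar hk)
  convert v.map_mul_sub_mul_left_le (mul_mem (natCast_mem _ ((2 * k).choose k)) (pow_mem hx k))
    hprod using 2
  ring

theorem sum_cong_legendre_sq (p : ℕ) (hp : p.Prime) (hodd : Odd p)
    (a x : ℚ) (ha : IsPInt p a) (hx : IsPInt p x)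
    (r : ℕ) (hr : r < p) (har : ModCong p 1 a r) :
    ModCong p 1
      (∑ k ∈ Finset.range p,
        ((2 * k).choose k : ℚ) * gchoose a k * gchoose (-1 - a) k * x ^ k)
      (∑ k ∈ Finset.range (r + 1),
        (r.choose k : ℚ) * ((r + k).choose k) * ((2 * k).choose k) * (-x) ^ k) :=
  sum_cong_legendre_sq_general p hp a x ha hx r hr har
end

section
/- Let p be an odd prime and a ∈ ℤ_p with residue ⟨a⟩ ∈ {0,…,p−1}. If ⟨a⟩ is odd, then ∑_{k=0}^{p−1} C(2k,k)·C(a,k)·C(−1−a,k)/4^k ≡ 0 (mod p²). -/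
/-!
Since `C(a,k) C(-1-a,k) = (-1)^k ∏_{i<k} (a-i)(a+1+i) / k!^2`, the sum is `F(a)` for a polynomial
`F = ∑_{k<p} c_k ∏_{i<k} (X-i)(X+1+i)` whose coefficients `c_k = (-1)^k C(2k,k) / (4^k k!^2)` are
`p`-integral (`k < p` and `p` is odd), and `F(-1-X) = F(X)`. A telescoping identity in `k`
(Zeilberger's certificate) gives `(n+1)^2 F(n+1) = n^2 F(n-1)` for `n < p-1`, so `F` vanishes at
every odd `m < p`: at `r`, and at `p-1-r`, hence at `r-p`. Therefore `(X-r)(X-r+p)` divides `F`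
over `ℤ_(p)`, and at `X = a ≡ r` both factors are divisible by `p`.
-/

open Finset Polynomial
open scoped Nat

section PairProd

variable {R : Type*} [CommRing R]

def pairProd (y : R) (k : ℕ) : R := ∏ i ∈ range k, (y - i) * (y + 1 + i)

lemma pairProd_succ (y : R) (k : ℕ) :
    pairProd y (k + 1) = pairProd y k * ((y - k) * (y + 1 + k)) :=
  prod_range_succ _ _

lemma pairProd_add_one_succ (y : R) (k : ℕ) :
    pairProd (y + 1) (k + 1) = pairProd y k * ((y + k + 1) * (y + k + 2)) := by
  induction k with
  | zero => simp [pairProd]; ring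
  | succ k ih => rw [pairProd_succ, ih, pairProd_succ]; push_cast; ring

lemma pairProd_sub_one_succ (y : R) (k : ℕ) :
    pairProd (y - 1) (k + 1) = pairProd y k * ((y - k) * (y - k - 1)) := by
  induction k with
  | zero => simp [pairProd]; ring
  | succ k ih => rw [pairProd_succ, ih, pairProd_succ]; push_cast; ring

lemma pairProd_neg_one_sub (y : R) (k : ℕ) : pairProd (-1 - y) k = pairProd y k :=
  prod_congr rfl fun _ _ => by ring

lemma pairProd_natCast_eq_zero {n k : ℕ} (h : n < k) : pairProd (n : R) k = 0 :=
  prod_eq_zero (mem_range.2 h) (by simp)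

lemma map_pairProd {S : Type*} [CommRing S] (f : R →+* S) (y : R) (k : ℕ) :
    f (pairProd y k) = pairProd (f y) k := by
  simp [pairProd, map_prod]

end PairProd

def centralCoeff (k : ℕ) : ℚ := (-1) ^ k * k.centralBinom / (4 ^ k * (k ! : ℚ) ^ 2)

lemma centralCoeff_succ (k : ℕ) :
    (2 * k + 1) * centralCoeff k = -2 * (k + 1) ^ 3 * centralCoeff (k + 1) := by
  have h : ((k + 1 : ℕ) : ℚ) * (k + 1).centralBinom = 2 * (2 * k + 1) * k.centralBinom := by
    exact_mod_cast k.succ_mul_centralBinom_succ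
  have hk : (k ! : ℚ) ≠ 0 := by positivity
  simp only [centralCoeff, Nat.factorial_succ]
  push_cast at h ⊢
  field_simp
  linear_combination (-2 * 4 ^ k * (-1) ^ k : ℚ) * h

lemma gchoose_mul_gchoose_neg_one_sub (a : ℚ) (k : ℕ) :
    gchoose a k * gchoose (-1 - a) k = (-1) ^ k * pairProd a k / (k ! : ℚ) ^ 2 := by
  have h : ∏ i ∈ range k, (-1 - a - i) = (-1) ^ k * ∏ i ∈ range k, (a + 1 + i) := by
    rw [← card_range k, ← prod_const, card_range, ← prod_mul_distrib]
    exact prod_congr rfl fun _ _ => by ring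
  rw [gchoose, gchoose, h, pairProd, prod_mul_distrib]
  ring

lemma choose_mul_gchoose_mul_gchoose (a : ℚ) (k : ℕ) :
    ((2 * k).choose k : ℚ) * gchoose a k * gchoose (-1 - a) k / 4 ^ k
      = centralCoeff k * pairProd a k := by
  rw [mul_assoc, gchoose_mul_gchoose_neg_one_sub, centralCoeff,
    Nat.centralBinom_eq_two_mul_choose]
  ring

def centralSum (N : ℕ) (y : ℚ) : ℚ := ∑ k ∈ range N, centralCoeff k * pairProd y k

lemma centralSum_succ (N : ℕ) (y : ℚ) :
    centralSum (N + 1) y = centralSum N y + centralCoeff N * pairProd y N :=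
  sum_range_succ _ _

lemma centralSum_neg_one_sub (N : ℕ) (y : ℚ) : centralSum N (-1 - y) = centralSum N y := by
  simp only [centralSum, pairProd_neg_one_sub]

-- Summed over `k` from the certificate `G(y, k+1) = (2y+1)(2k+1) c_k pairProd y k`.
lemma centralSum_recurrence (N : ℕ) (y : ℚ) :
    (y + 1) ^ 2 * centralSum (N + 1) (y + 1) - y ^ 2 * centralSum (N + 1) (y - 1)
      = (2 * y + 1) * (2 * N + 1) * centralCoeff N * pairProd y N := by
  induction N with
  | zero => simp [centralSum, pairProd]; ring
  | succ N ih =>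
    rw [centralSum_succ _ (y + 1), centralSum_succ _ (y - 1), pairProd_add_one_succ,
      pairProd_sub_one_succ, pairProd_succ]
    push_cast
    linear_combination ih + (2 * y + 1) * pairProd y N * centralCoeff_succ N

lemma centralSum_natCast_of_odd {m N : ℕ} (hm : Odd m) (h : m < N) :
    centralSum N m = 0 := by
  obtain ⟨M, rfl⟩ : ∃ M, N = M + 1 := ⟨N - 1, by omega⟩
  have step (n : ℕ) (hn : n < M) :
      (n + 1) ^ 2 * centralSum (M + 1) (n + 1) = n ^ 2 * centralSum (M + 1) (n - 1) := by
    have := centralSum_recurrence M n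
    rw [pairProd_natCast_eq_zero hn, mul_zero] at this
    linear_combination this
  obtain ⟨j, rfl⟩ := hm
  induction j with
  | zero => simpa using step 0 (by omega)
  | succ j ih =>
    have h := step (2 * j + 2) (by omega)
    have hprev : ((2 * j + 2 : ℕ) : ℚ) - 1 = (2 * j + 1 : ℕ) := by push_cast; ring
    have hnext : ((2 * j + 2 : ℕ) : ℚ) + 1 = (2 * (j + 1) + 1 : ℕ) := by push_cast; ring
    rw [hprev, hnext, ih (by omega), mul_zero] at h
    exact (mul_eq_zero.1 h).resolve_left (by positivity)

lemma Polynomial.X_sub_C_mul_X_sub_C_dvd_of_isRoot {R : Type*} [CommRing R] [IsDomain R] {f : R[X]}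
    {u v : R} (huv : u ≠ v) (hu : f.IsRoot u) (hv : f.IsRoot v) :
    (X - C u) * (X - C v) ∣ f := by
  obtain ⟨g, rfl⟩ := dvd_iff_isRoot.2 hu
  have hg : g.IsRoot v := by
    simpa [sub_eq_zero, huv.symm] using hv
  exact mul_dvd_mul_left _ (dvd_iff_isRoot.2 hg)

section PIntegers

variable {p : ℕ} [Fact p.Prime]

variable (p) in
def pIntegers : Subring ℚ where
  carrier := {x | IsPInt p x}
  mul_mem' {x y} hx hy h := by
    rcases (Fact.out : p.Prime).dvd_mul.1 (h.trans (Rat.mul_den_dvd x y)) with h | h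
    exacts [hx h, hy h]
  one_mem' := by simp [IsPInt, (Fact.out : p.Prime).ne_one]
  add_mem' {x y} hx hy h := by
    rcases (Fact.out : p.Prime).dvd_mul.1 (h.trans (Rat.add_den_dvd x y)) with h | h
    exacts [hx h, hy h]
  zero_mem' := by simp [IsPInt, (Fact.out : p.Prime).ne_one]
  neg_mem' := by simp [IsPInt]

lemma intCast_div_natCast_mem_pIntegers (n : ℤ) {d : ℕ} (hd : ¬ p ∣ d) :
    (n / d : ℚ) ∈ pIntegers p := by
  intro h
  have := Rat.den_dvd n d
  rw [Rat.divInt_eq_div] at this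
  exact hd (Int.natCast_dvd_natCast.1 ((Int.natCast_dvd_natCast.2 h).trans this))

lemma centralCoeff_mem_pIntegers (hodd : Odd p) {k : ℕ} (hk : k < p) :
    centralCoeff k ∈ pIntegers p := by
  have hp : p.Prime := Fact.out
  have hden : ¬ p ∣ 4 ^ k * k ! ^ 2 := by
    rw [hp.dvd_mul, show 4 ^ k = 2 ^ (2 * k) by rw [pow_mul]; norm_num]
    rintro (h | h)
    · rw [(Nat.prime_dvd_prime_iff_eq hp Nat.prime_two).1 (hp.dvd_of_dvd_pow h)] at hodd
      exact Nat.not_odd_iff_even.2 even_two hodd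
    · exact absurd ((hp.dvd_factorial).1 (hp.dvd_of_dvd_pow h)) (by omega)
  convert intCast_div_natCast_mem_pIntegers ((-1) ^ k * k.centralBinom) hden using 1
  simp [centralCoeff]

lemma exists_centralSum_eq_mul (hodd : Odd p) {r : ℕ} (hr : r < p) (hrodd : Odd r) :
    ∃ g : (pIntegers p)[X], ∀ x : pIntegers p,
      centralSum p x = (x - r) * (x - r + p) * ((g.eval x : pIntegers p) : ℚ) := by
  set f : (pIntegers p)[X] :=
    ∑ k : Fin p, C ⟨centralCoeff k, centralCoeff_mem_pIntegers hodd k.2⟩ * pairProd X k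
  have hf (x : pIntegers p) : ((f.eval x : pIntegers p) : ℚ) = centralSum p x := by
    have heval (k : ℕ) : (pairProd X k).eval x = pairProd x k := by
      simpa using map_pairProd (evalRingHom x) X k
    simp only [f, eval_finsetSum, eval_mul, eval_C, heval]
    rw [centralSum, ← Fin.sum_univ_eq_sum_range]
    push_cast
    exact sum_congr rfl fun k _ => congrArg _ (map_pairProd (pIntegers p).subtype x k)
  have hroot (x : pIntegers p) (hx : centralSum p x = 0) : f.IsRoot x := by
    rw [IsRoot, ← Subtype.coe_inj, hf, hx]; rfl
  have hp0 : (p : pIntegers p) ≠ 0 := Nat.cast_ne_zero.2 (Fact.out : p.Prime).ne_zero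
  have hroot_sub : f.IsRoot (r - p) := by
    refine hroot _ ?_
    have hreflect : ((r - p : pIntegers p) : ℚ) = -1 - ((p - 1 - r : ℕ) : ℚ) := by
      push_cast [Nat.sub_sub, Nat.cast_sub (show 1 + r ≤ p by omega)]; ring
    rw [hreflect, centralSum_neg_one_sub]
    obtain ⟨c, rfl⟩ := hodd
    obtain ⟨d, rfl⟩ := hrodd
    exact centralSum_natCast_of_odd ⟨c - d - 1, by omega⟩ (by omega)
  obtain ⟨g, hg⟩ := Polynomial.X_sub_C_mul_X_sub_C_dvd_of_isRoot (sub_ne_zero.1 (by rwa [sub_sub_cancel]))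
    (hroot r (by simpa using centralSum_natCast_of_odd hrodd hr)) hroot_sub
  refine ⟨g, fun x => ?_⟩
  rw [← hf, hg]
  simp only [eval_mul, eval_sub, eval_X, eval_C]
  push_cast
  ring

end PIntegers

theorem sum_div_four_pow_cong (p : ℕ) (hp : p.Prime) (hodd : Odd p)
    (a : ℚ) (ha : IsPInt p a) (r : ℕ) (hr : r < p) (har : ModCong p 1 a r)
    (hrodd : Odd r) :
    ModCong p 2
      (∑ k ∈ Finset.range p,
        ((2 * k).choose k : ℚ) * gchoose a k * gchoose (-1 - a) k / 4 ^ k) 0 := by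
  have := Fact.mk hp
  obtain ⟨z, hz, haz⟩ := har
  obtain ⟨g, hg⟩ := exists_centralSum_eq_mul hodd hr hrodd
  let x : pIntegers p := ⟨a, ha⟩
  have hzx : z * (z + 1) * ((g.eval x : pIntegers p) : ℚ) ∈ pIntegers p :=
    mul_mem (mul_mem hz (add_mem hz (one_mem _))) (SetLike.coe_mem _)
  refine ⟨_, hzx, ?_⟩
  simp only [choose_mul_gchoose_mul_gchoose, sub_zero]
  rw [← centralSum, hg x]
  rw [pow_one] at haz
  linear_combination (a - r + p + p * z) * ((g.eval x : pIntegers p) : ℚ) * haz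
end

section
/- For rational x with |4x(1−x)| small enough (as a formal power series identity in x): (∑_{k=0}^∞ (a)_k(1−a)_k/(k!)² · x^k)² = ∑_{k=0}^∞ (a)_k(1−a)_k/(k!)² · C(2k,k) · (x(1−x))^k, as an identity of formal power series over ℚ for any rational parameter a. -/
namespace Derivation

variable {R A : Type*} [CommRing R] [CommRing A] [Algebra R A] (D : Derivation R A A)

/-- The symmetric square of the operator `u ↦ D (p * D u) - c * u`. -/
def symmSquareOp (p c u : A) : A :=
  D (p * D (p * D u)) - c * (4 * p * D u + 2 * D p * u)

variable {D}

lemma leibniz_mul (a b : A) : D (a * b) = a * D b + b * D a := by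
  simp [leibniz]

@[simp]
lemma map_ofNat (n : ℕ) [n.AtLeastTwo] : D (ofNat(n) : A) = 0 := by
  rw [← Nat.cast_ofNat, map_natCast]

lemma leibniz_pow_succ (a : A) (n : ℕ) : D (a ^ (n + 1)) = (n + 1) * a ^ n * D a := by
  simp [leibniz_pow]
  ring

lemma symmSquareOp_add (p c u v : A) :
    symmSquareOp D p c (u + v) = symmSquareOp D p c u + symmSquareOp D p c v := by
  simp only [symmSquareOp, map_add, mul_add]
  ring

lemma symmSquareOp_sub (p c u v : A) :
    symmSquareOp D p c (u - v) = symmSquareOp D p c u - symmSquareOp D p c v := by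
  simp only [symmSquareOp, map_sub, mul_sub]
  ring

lemma symmSquareOp_const_mul {μ : A} (hμ : D μ = 0) (p c u : A) :
    symmSquareOp D p c (μ * u) = μ * symmSquareOp D p c u := by
  have hD (x : A) : D (μ * x) = μ * D x := by simp [hμ]
  simp only [symmSquareOp, hD, mul_left_comm p μ]
  ring

lemma symmSquareOp_sq {p c y : A} (hc : D c = 0) (hy : D (p * D y) = c * y) :
    symmSquareOp D p c (y ^ 2) = 0 := by
  have h1 : p * D (y ^ 2) = 2 * y * (p * D y) := by
    rw [sq, leibniz_mul]; ring
  have h2 : p * D (p * D (y ^ 2)) = 2 * ((p * D y) ^ 2 + c * (p * y ^ 2)) := by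
    rw [h1, two_mul, mul_add, add_mul, map_add, leibniz_mul, hy]; ring
  rw [symmSquareOp, h2]
  simp only [leibniz_mul, map_add, map_ofNat, sq, hy, hc]
  ring

lemma symmSquareOp_pow_succ {p : A} (c : A) (hp : D p ^ 2 = 1 - 4 * p)
    (hp' : D (D p) = -2) (k : ℕ) :
    symmSquareOp D p c (p ^ (k + 1)) = D p * ((k + 1) ^ 3 * p ^ k
      - (2 * k + 3) * (2 * (k + 1) * (k + 2) + 2 * c) * p ^ (k + 1)) := by
  have h1 : p * D (p ^ (k + 1)) = (k + 1) * (p ^ (k + 1) * D p) := by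
    rw [leibniz_pow_succ]; ring
  have h2 : p * D (p * D (p ^ (k + 1))) =
      (k + 1) * p ^ (k + 1) * ((k + 1) - (4 * k + 6) * p) := by
    rw [h1, leibniz_mul, leibniz_mul, leibniz_pow_succ, hp']
    simp only [map_add, map_natCast, map_one_eq_zero]
    linear_combination (k + 1) ^ 2 * p ^ (k + 1) * hp
  rw [symmSquareOp, h2]
  simp only [leibniz_mul, map_add, map_sub, map_natCast, map_one_eq_zero, map_ofNat, leibniz_pow_succ]
  ring

lemma symmSquareOp_one (p c : A) : symmSquareOp D p c 1 = -(2 * c * D p) := by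
  simp [symmSquareOp]
  ring

lemma symmSquareOp_sum_range {p c : A} (hp : D p ^ 2 = 1 - 4 * p) (hp' : D (D p) = -2)
    {d : ℕ → A} (hd : ∀ k, D (d k) = 0)
    (hrec : ∀ k : ℕ, ((k : A) + 1) ^ 3 * d (k + 1) = 2 * (2 * k + 1) * (k ^ 2 + k + c) * d k)
    (N : ℕ) :
    symmSquareOp D p c (∑ k ∈ Finset.range (N + 1), d k * p ^ k) =
      -(((N : A) + 1) ^ 3 * d (N + 1) * D p * p ^ N) := by
  induction N with
  | zero =>
    simp only [Nat.cast_zero, zero_add, Finset.sum_range_one, pow_zero]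
    rw [symmSquareOp_const_mul (hd 0), symmSquareOp_one]
    linear_combination (D p) * hrec 0
  | succ N ih =>
    rw [Finset.sum_range_succ, symmSquareOp_add, ih, symmSquareOp_const_mul (hd _),
      symmSquareOp_pow_succ c hp hp']
    linear_combination (norm := (push_cast; ring)) (D p * p ^ (N + 1)) * hrec (N + 1)

end Derivation

open PowerSeries

section PowerSeries

variable {K : Type*} [CommRing K]

lemma coeff_succ_X_mul_one_sub_X_mul (n : ℕ) (f : K⟦X⟧) :
    coeff (n + 1) (X * (1 - X) * f) = coeff n f - coeff n (X * f) := by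
  rw [mul_sub, mul_one, sub_mul, mul_assoc X X f, map_sub, coeff_succ_X_mul, coeff_succ_X_mul]

lemma coeff_zero_X_mul_one_sub_X_mul (f : K⟦X⟧) : coeff 0 (X * (1 - X) * f) = 0 := by
  simp [mul_assoc]

lemma derivative_X_mul_one_sub_X : d⁄dX K (X * (1 - X)) = 1 - 2 * X := by
  simp [Derivation.leibniz]
  ring

lemma derivative_mk_hypergeometric {c : ℕ → K} {l : K}
    (hc : ∀ n : ℕ, ((n : K) + 1) ^ 2 * c (n + 1) = (n ^ 2 + n + l) * c n) :
    d⁄dX K (X * (1 - X) * d⁄dX K (mk c)) = C l * mk c := by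
  ext n
  rw [coeff_derivative, coeff_succ_X_mul_one_sub_X_mul, coeff_C_mul, coeff_mk]
  rcases n with _ | n
  · simp [coeff_derivative]
    linear_combination hc 0
  · rw [coeff_succ_X_mul]
    simp only [coeff_derivative, coeff_mk]
    linear_combination (norm := (push_cast; ring)) hc (n + 1)

/-- Here `coeff j (X * w)` is the coefficient of index `j - 1`, read as `0` for `j = 0`. -/
lemma coeff_symmSquareOp (l : K) (w : K⟦X⟧) (j : ℕ) :
    coeff j (Derivation.symmSquareOp (d⁄dX K) (X * (1 - X)) (C l) w) =
      (j + 1) ^ 3 * coeff (j + 1) w - (2 * j + 1) * (j * (j + 1) + 2 * l) * coeff j w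
        + j * (j ^ 2 - 1 + 4 * l) * coeff j (X * w) := by
  have hlower : C l * (4 * (X * (1 - X)) * d⁄dX K w + 2 * (1 - 2 * X) * w) =
      C (4 * l) * (X * (1 - X) * d⁄dX K w) + C (2 * l) * w - C (4 * l) * (X * w) := by
    simp only [map_mul, map_ofNat]
    ring
  rw [Derivation.symmSquareOp, derivative_X_mul_one_sub_X, hlower]
  rcases j with _ | _ | j <;>
    simp only [coeff_derivative, coeff_succ_X_mul_one_sub_X_mul, coeff_zero_X_mul_one_sub_X_mul,
      coeff_succ_X_mul, coeff_zero_X_mul, map_sub, map_add, coeff_C_mul] <;>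
    push_cast <;> ring

lemma coeff_mul_X_mul_one_sub_X_pow_of_lt (f : K⟦X⟧) {j n : ℕ} (hj : j < n) :
    coeff j (f * (X * (1 - X)) ^ n) = 0 := by
  rw [mul_pow, mul_left_comm, coeff_X_pow_mul', if_neg (by omega)]

end PowerSeries

section Field

variable {K : Type*} [Field K] [CharZero K]

lemma coeff_eq_zero_of_coeff_symmSquareOp_eq_zero {l : K} {w : K⟦X⟧} {n : ℕ}
    (h0 : coeff 0 w = 0)
    (h : ∀ j < n, coeff j (Derivation.symmSquareOp (d⁄dX K) (X * (1 - X)) (C l) w) = 0) :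
    coeff n w = 0 := by
  suffices ∀ j ≤ n, ∀ i ≤ j, coeff i w = 0 from this n le_rfl n le_rfl
  intro j hj
  induction j with
  | zero => intro i hi; rwa [Nat.le_zero.mp hi]
  | succ j ih =>
    have ih := ih (by omega)
    have hXw : coeff j (X * w) = 0 := by
      rcases j with _ | j
      · exact coeff_zero_X_mul w
      · rw [coeff_succ_X_mul]; exact ih j (by omega)
    have hj := h j (by omega)
    rw [coeff_symmSquareOp, hXw, ih j le_rfl] at hj
    have hw : coeff (j + 1) w = 0 := by
      have : ((j : K) + 1) ^ 3 * coeff (j + 1) w = 0 := by linear_combination hj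
      exact (mul_eq_zero.mp this).resolve_left (pow_ne_zero _ (Nat.cast_add_one_ne_zero j))
    intro i hi
    rcases Nat.of_le_succ hi with hi | rfl
    exacts [ih i hi, hw]

/-- The coefficients of `₂F₁(a, 1 - a; 1; x)`. -/
noncomputable def hypergeometricCoeff (a : K) (k : ℕ) : K :=
  (ascPochhammer K k).eval a * (ascPochhammer K k).eval (1 - a) / (k.factorial : K) ^ 2

lemma hypergeometricCoeff_zero (a : K) : hypergeometricCoeff a 0 = 1 := by
  simp [hypergeometricCoeff]

lemma hypergeometricCoeff_succ (a : K) (k : ℕ) :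
    ((k : K) + 1) ^ 2 * hypergeometricCoeff a (k + 1) =
      (k ^ 2 + k + a * (1 - a)) * hypergeometricCoeff a k := by
  have hf : (k.factorial : K) ≠ 0 := Nat.cast_ne_zero.mpr k.factorial_ne_zero
  have hk : (k : K) + 1 ≠ 0 := Nat.cast_add_one_ne_zero k
  simp only [hypergeometricCoeff, ascPochhammer_succ_right, Polynomial.eval_mul,
    Polynomial.eval_add, Polynomial.eval_X, Polynomial.eval_natCast, Nat.factorial_succ]
  push_cast
  field_simp
  ring

lemma hypergeometricCoeff_mul_centralBinom_succ (a : K) (k : ℕ) :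
    ((k : K) + 1) ^ 3 * (hypergeometricCoeff a (k + 1) * (k + 1).centralBinom) =
      2 * (2 * k + 1) * (k ^ 2 + k + a * (1 - a)) * (hypergeometricCoeff a k * k.centralBinom) := by
  have hb : ((k : K) + 1) * (k + 1).centralBinom = 2 * (2 * k + 1) * k.centralBinom := by
    exact_mod_cast Nat.succ_mul_centralBinom_succ k
  linear_combination ((k : K) + 1) * (k + 1).centralBinom * hypergeometricCoeff_succ a k
    + (k ^ 2 + k + a * (1 - a)) * hypergeometricCoeff a k * hb

theorem coeff_sq_mk_hypergeometricCoeff (a : K) (n : ℕ) :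
    coeff n (mk (hypergeometricCoeff a) ^ 2) =
      ∑ k ∈ Finset.range (n + 1), hypergeometricCoeff a k * k.centralBinom *
        coeff n ((X * (1 - X)) ^ k) := by
  set P : K⟦X⟧ := X * (1 - X)
  set d : ℕ → K := fun k => hypergeometricCoeff a k * k.centralBinom
  set S := ∑ k ∈ Finset.range (n + 1), C (d k) * P ^ k
  have hP : d⁄dX K P ^ 2 = 1 - 4 * P := by rw [derivative_X_mul_one_sub_X]; ring
  have hP' : d⁄dX K (d⁄dX K P) = -2 := by rw [derivative_X_mul_one_sub_X]; simp
  have hrec (k : ℕ) : ((k : K⟦X⟧) + 1) ^ 3 * C (d (k + 1)) =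
      2 * (2 * k + 1) * (k ^ 2 + k + C (a * (1 - a))) * C (d k) := by
    have h := congrArg C (hypergeometricCoeff_mul_centralBinom_succ a k)
    simp only [map_mul, map_add, map_pow, map_natCast, map_ofNat, map_one] at h
    simp only [d, map_mul, map_natCast]
    exact h
  have hy := derivative_mk_hypergeometric (hypergeometricCoeff_succ a)
  have hS := Derivation.symmSquareOp_sum_range hP hP' (fun k => derivative_C) hrec n
  have hw : coeff n (mk (hypergeometricCoeff a) ^ 2 - S) = 0 := by
    refine coeff_eq_zero_of_coeff_symmSquareOp_eq_zero (l := a * (1 - a)) ?_ fun j hj => ?_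
    · simp [S, P, d, hypergeometricCoeff_zero, Finset.sum_range_succ']
    · rw [Derivation.symmSquareOp_sub, Derivation.symmSquareOp_sq derivative_C hy, hS,
        zero_sub, neg_neg]
      exact coeff_mul_X_mul_one_sub_X_pow_of_lt _ hj
  rw [map_sub, sub_eq_zero] at hw
  rw [hw]
  simp only [S, map_sum, coeff_C_mul, d]

end Field

theorem clausen_gauss_series (a : ℚ) (n : ℕ) :
    PowerSeries.coeff n
        ((PowerSeries.mk fun k =>
          Polynomial.eval a (ascPochhammer ℚ k) *
            Polynomial.eval (1 - a) (ascPochhammer ℚ k) / (k.factorial : ℚ) ^ 2) ^ 2) =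
      ∑ k ∈ Finset.range (n + 1),
        Polynomial.eval a (ascPochhammer ℚ k) *
            Polynomial.eval (1 - a) (ascPochhammer ℚ k) / (k.factorial : ℚ) ^ 2 *
          ((2 * k).choose k) *
          PowerSeries.coeff n ((PowerSeries.X * (1 - PowerSeries.X)) ^ k) :=
  coeff_sq_mk_hypergeometricCoeff a n
end
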